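/- arXiv:1606.05046 — 3 statements merged into one kernel-verified Lean document; each statement's English description precedes it below -/
import Mathlib

section
/- (Theorem 1, prediction-step sufficiency.) Suppose there exist reals τu, τw, τv, τf, τh ≥ 0 and τy ∈ ℝ such that the m×m symmetric matrix ΦᵀP⁻¹Φ − Ξ − τy·ΨᵀΨ is negative semidefinite. Then for all u, w, δf ∈ ℝⁿ and v, δh ∈ ℝ^{n₁} with ‖u‖ ≤ 1, wᵀQ⁻¹w ≤ 1, vᵀR⁻¹v ≤ 1, ‖δf‖ ≤ 1, ‖δh‖ ≤ 1 (Euclidean norms) that satisfy the exact linearization identities f(x̂ + E₀u) = f(x̂) + J_f E₀ u + e_f + B_f δf and hₘ(x̂ + E₀u) = hₘ(x̂) + J_h E₀ u + e_h + B_h δh together with the measurement equation y = hₘ(x̂ + E₀u) + v, the one-step-ahead state x⁺ := f(x̂ + E₀u) + w satisfies (x⁺ − x̂ₚ)ᵀ P⁻¹ (x⁺ − x̂ₚ) ≤ 1, i.e. x⁺ lies in the ellipsoid with center x̂ₚ and shape matrix P. -/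
noncomputable section

/-- Matrix–vector multiplication, viewed as a map between Euclidean spaces. -/
def mvr {k l : ℕ} (M : Matrix (Fin k) (Fin l) ℝ) (v : EuclideanSpace ℝ (Fin l)) :
    EuclideanSpace ℝ (Fin k) := WithLp.toLp 2 (M.mulVec v)

/-- A vector viewed as a one-column matrix. -/
def colOf {k : ℕ} (v : EuclideanSpace ℝ (Fin k)) : Matrix (Fin k) (Fin 1) ℝ :=
  Matrix.of fun i _ => v i

/-- A real matrix is negative semidefinite iff its negation is positive semidefinite. -/
def Matrix.NegSemidef' {m : Type*} [Fintype m] (M : Matrix m m ℝ) : Prop :=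
  (-M).PosSemidef

/-- Index type for `ℝ^m` with `m = 1 + 3n + 2n₁`, split into six blocks of sizes
`1, n, n, n₁, n, n₁` (corresponding to the components `1, u, w, v, δf, δh`). -/
abbrev Idx6 (n n₁ : ℕ) := Fin 1 ⊕ (Fin n ⊕ (Fin n ⊕ (Fin n₁ ⊕ (Fin n ⊕ Fin n₁))))

/-- The block matrix `Φ = [f(x̂)+e_f−x̂ₚ ∣ J_f E₀ ∣ Iₙ ∣ 0 ∣ B_f ∣ 0]`. -/
def Phi6 {n n₁ : ℕ} (fxh ef xhp : EuclideanSpace ℝ (Fin n))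
    (Jf E₀ Bf : Matrix (Fin n) (Fin n) ℝ) : Matrix (Fin n) (Idx6 n n₁) ℝ :=
  Matrix.fromCols (colOf (fxh + ef - xhp))
    (Matrix.fromCols (Jf * E₀)
      (Matrix.fromCols 1
        (Matrix.fromCols 0
          (Matrix.fromCols Bf 0))))

/-- The block matrix `Ψ = [hₘ(x̂)+e_h−y ∣ J_h E₀ ∣ 0 ∣ I_{n₁} ∣ 0 ∣ B_h]`. -/
def Psi6 {n n₁ : ℕ} (hxh eh y : EuclideanSpace ℝ (Fin n₁))
    (JhM : Matrix (Fin n₁) (Fin n) ℝ) (E₀ : Matrix (Fin n) (Fin n) ℝ)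
    (Bh : Matrix (Fin n₁) (Fin n₁) ℝ) : Matrix (Fin n₁) (Idx6 n n₁) ℝ :=
  Matrix.fromCols (colOf (hxh + eh - y))
    (Matrix.fromCols (JhM * E₀)
      (Matrix.fromCols 0
        (Matrix.fromCols 1
          (Matrix.fromCols 0 Bh))))

/-- The block-diagonal multiplier matrix
`Ξ = diag(1−τu−τw−τv−τf−τh, τu Iₙ, τw Q⁻¹, τv R⁻¹, τf Iₙ, τh I_{n₁})`. -/
def Xi6 {n n₁ : ℕ} (Q : Matrix (Fin n) (Fin n) ℝ) (R : Matrix (Fin n₁) (Fin n₁) ℝ)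
    (τu τw τv τf τh : ℝ) : Matrix (Idx6 n n₁) (Idx6 n n₁) ℝ :=
  Matrix.fromBlocks ((1 - τu - τw - τv - τf - τh) • (1 : Matrix (Fin 1) (Fin 1) ℝ)) 0 0
    (Matrix.fromBlocks (τu • (1 : Matrix (Fin n) (Fin n) ℝ)) 0 0
      (Matrix.fromBlocks (τw • Q⁻¹) 0 0
        (Matrix.fromBlocks (τv • R⁻¹) 0 0
          (Matrix.fromBlocks (τf • (1 : Matrix (Fin n) (Fin n) ℝ)) 0 0
            (τh • (1 : Matrix (Fin n₁) (Fin n₁) ℝ))))))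

/-!
The S-procedure. Evaluate the quadratic form of `ΦᵀP⁻¹Φ − Ξ − τy ΨᵀΨ ⪯ 0` at
`ξ = (1, u, w, v, δf, δh)`. The linearization identities give `Φξ = x⁺ − x̂ₚ`, and together
with the measurement equation `Ψξ = 0`, which kills the `τy` term whatever its sign. Finally
`ξᵀΞξ = 1 − Σ τ (1 − qᵢ)`, where the `qᵢ ≤ 1` are the five quadratic constraints, so
`ξᵀΞξ ≤ 1` because all multipliers are nonnegative.
-/

open Matrix

lemma dotProduct_ofLp_self_le_one {ι : Type*} [Fintype ι] {x : EuclideanSpace ℝ ι}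
    (hx : ‖x‖ ≤ 1) : x.ofLp ⬝ᵥ x.ofLp ≤ 1 := by
  have h : x.ofLp ⬝ᵥ x.ofLp = ‖x‖ ^ 2 := by
    rw [← real_inner_self_eq_norm_sq, EuclideanSpace.inner_eq_star_dotProduct, star_trivial]
  rw [h]
  exact pow_le_one₀ (norm_nonneg x) hx

lemma dotProduct_transpose_mul_mul_mulVec {ι κ : Type*} [Fintype ι] [Fintype κ]
    (A : Matrix κ ι ℝ) (B : Matrix κ κ ℝ) (ξ : ι → ℝ) :
    ξ ⬝ᵥ (Aᵀ * B * A) *ᵥ ξ = (A *ᵥ ξ) ⬝ᵥ B *ᵥ (A *ᵥ ξ) := by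
  rw [Matrix.mul_assoc, ← mulVec_mulVec, dotProduct_mulVec, vecMul_transpose, ← mulVec_mulVec]

lemma dotProduct_mulVec_le_of_negSemidef' {ι : Type*} [Fintype ι] {M N : Matrix ι ι ℝ}
    (h : (M - N).NegSemidef') (ξ : ι → ℝ) : ξ ⬝ᵥ M *ᵥ ξ ≤ ξ ⬝ᵥ N *ᵥ ξ := by
  have := h.dotProduct_mulVec_nonneg ξ
  rw [star_trivial, neg_mulVec, dotProduct_neg, sub_mulVec, dotProduct_sub] at this
  linarith

lemma colOf_mulVec_one {k : ℕ} (v : EuclideanSpace ℝ (Fin k)) :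
    colOf v *ᵥ (fun _ => 1) = v.ofLp := by
  ext i
  simp [colOf, mulVec, dotProduct]

/-- The paper's `ξ = (1, u, w, v, δf, δh)`. -/
def blockVec6 {n n₁ : ℕ} (u w : EuclideanSpace ℝ (Fin n)) (v : EuclideanSpace ℝ (Fin n₁))
    (δf : EuclideanSpace ℝ (Fin n)) (δh : EuclideanSpace ℝ (Fin n₁)) : Idx6 n n₁ → ℝ :=
  Sum.elim (fun _ => 1) (Sum.elim u (Sum.elim w (Sum.elim v (Sum.elim δf δh))))

section

variable {n n₁ : ℕ} (u w δf : EuclideanSpace ℝ (Fin n)) (v δh : EuclideanSpace ℝ (Fin n₁))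

lemma Phi6_mulVec_blockVec6 (fxh ef xhp : EuclideanSpace ℝ (Fin n))
    (Jf E₀ Bf : Matrix (Fin n) (Fin n) ℝ) :
    Phi6 (n₁ := n₁) fxh ef xhp Jf E₀ Bf *ᵥ blockVec6 u w v δf δh =
      (fxh + ef - xhp + mvr Jf (mvr E₀ u) + w + mvr Bf δf).ofLp := by
  simp only [Phi6, blockVec6, fromCols_mulVec, Sum.elim_comp_inl, Sum.elim_comp_inr,
    colOf_mulVec_one, one_mulVec, zero_mulVec, add_zero, zero_add, mvr, mulVec_mulVec,
    WithLp.ofLp_add, WithLp.ofLp_sub]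
  abel

lemma Psi6_mulVec_blockVec6 (hxh eh y : EuclideanSpace ℝ (Fin n₁))
    (JhM : Matrix (Fin n₁) (Fin n) ℝ) (E₀ : Matrix (Fin n) (Fin n) ℝ)
    (Bh : Matrix (Fin n₁) (Fin n₁) ℝ) :
    Psi6 hxh eh y JhM E₀ Bh *ᵥ blockVec6 u w v δf δh =
      (hxh + eh - y + mvr JhM (mvr E₀ u) + v + mvr Bh δh).ofLp := by
  simp only [Psi6, blockVec6, fromCols_mulVec, Sum.elim_comp_inl, Sum.elim_comp_inr,
    colOf_mulVec_one, one_mulVec, zero_mulVec, zero_add, mvr, mulVec_mulVec,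
    WithLp.ofLp_add, WithLp.ofLp_sub]
  abel

lemma blockVec6_dotProduct_Xi6_mulVec (Q : Matrix (Fin n) (Fin n) ℝ)
    (R : Matrix (Fin n₁) (Fin n₁) ℝ) (τu τw τv τf τh : ℝ) :
    blockVec6 u w v δf δh ⬝ᵥ Xi6 Q R τu τw τv τf τh *ᵥ blockVec6 u w v δf δh =
      1 - τu * (1 - u.ofLp ⬝ᵥ u.ofLp) - τw * (1 - w.ofLp ⬝ᵥ Q⁻¹ *ᵥ w.ofLp)
        - τv * (1 - v.ofLp ⬝ᵥ R⁻¹ *ᵥ v.ofLp) - τf * (1 - δf.ofLp ⬝ᵥ δf.ofLp)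
        - τh * (1 - δh.ofLp ⬝ᵥ δh.ofLp) := by
  simp only [blockVec6, Xi6, fromBlocks_mulVec, Sum.elim_comp_inl, Sum.elim_comp_inr,
    zero_mulVec, add_zero, zero_add, sumElim_dotProduct_sumElim, smul_mulVec, one_mulVec,
    dotProduct_smul, smul_eq_mul]
  simp only [dotProduct, Finset.univ_unique, Finset.sum_singleton, mul_one]
  ring

lemma blockVec6_dotProduct_Xi6_mulVec_le_one {Q : Matrix (Fin n) (Fin n) ℝ}
    {R : Matrix (Fin n₁) (Fin n₁) ℝ} {τu τw τv τf τh : ℝ}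
    (hτu : 0 ≤ τu) (hτw : 0 ≤ τw) (hτv : 0 ≤ τv) (hτf : 0 ≤ τf) (hτh : 0 ≤ τh)
    (hu : ‖u‖ ≤ 1) (hw : w.ofLp ⬝ᵥ Q⁻¹ *ᵥ w.ofLp ≤ 1) (hv : v.ofLp ⬝ᵥ R⁻¹ *ᵥ v.ofLp ≤ 1)
    (hδf : ‖δf‖ ≤ 1) (hδh : ‖δh‖ ≤ 1) :
    blockVec6 u w v δf δh ⬝ᵥ Xi6 Q R τu τw τv τf τh *ᵥ blockVec6 u w v δf δh ≤ 1 := by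
  rw [blockVec6_dotProduct_Xi6_mulVec]
  have := mul_nonneg hτu (sub_nonneg.2 (dotProduct_ofLp_self_le_one hu))
  have := mul_nonneg hτw (sub_nonneg.2 hw)
  have := mul_nonneg hτv (sub_nonneg.2 hv)
  have := mul_nonneg hτf (sub_nonneg.2 (dotProduct_ofLp_self_le_one hδf))
  have := mul_nonneg hτh (sub_nonneg.2 (dotProduct_ofLp_self_le_one hδh))
  linarith

end

theorem prediction_step_sufficiency_general
    {n n₁ : ℕ}
    (f : EuclideanSpace ℝ (Fin n) → EuclideanSpace ℝ (Fin n))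
    (hM : EuclideanSpace ℝ (Fin n) → EuclideanSpace ℝ (Fin n₁))
    (xh : EuclideanSpace ℝ (Fin n)) (E₀ Jf : Matrix (Fin n) (Fin n) ℝ)
    (JhM : Matrix (Fin n₁) (Fin n) ℝ)
    (ef : EuclideanSpace ℝ (Fin n)) (Bf : Matrix (Fin n) (Fin n) ℝ)
    (eh : EuclideanSpace ℝ (Fin n₁)) (Bh : Matrix (Fin n₁) (Fin n₁) ℝ)
    (y : EuclideanSpace ℝ (Fin n₁)) (xhp : EuclideanSpace ℝ (Fin n))
    (P Q : Matrix (Fin n) (Fin n) ℝ) (R : Matrix (Fin n₁) (Fin n₁) ℝ)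
    (τu τw τv τf τh τy : ℝ)
    (hτu : 0 ≤ τu) (hτw : 0 ≤ τw) (hτv : 0 ≤ τv) (hτf : 0 ≤ τf) (hτh : 0 ≤ τh)
    (hLMI : Matrix.NegSemidef'
      ((Phi6 (n₁ := n₁) (f xh) ef xhp Jf E₀ Bf).transpose * P⁻¹ *
          Phi6 (n₁ := n₁) (f xh) ef xhp Jf E₀ Bf -
        Xi6 Q R τu τw τv τf τh -
        τy • ((Psi6 (hM xh) eh y JhM E₀ Bh).transpose * Psi6 (hM xh) eh y JhM E₀ Bh))) :
    ∀ (u w δf : EuclideanSpace ℝ (Fin n)) (v δh : EuclideanSpace ℝ (Fin n₁)),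
      ‖u‖ ≤ 1 →
      dotProduct (fun i => w i) (Q⁻¹.mulVec fun i => w i) ≤ 1 →
      dotProduct (fun i => v i) (R⁻¹.mulVec fun i => v i) ≤ 1 →
      ‖δf‖ ≤ 1 → ‖δh‖ ≤ 1 →
      f (xh + mvr E₀ u) = f xh + mvr Jf (mvr E₀ u) + ef + mvr Bf δf →
      hM (xh + mvr E₀ u) = hM xh + mvr JhM (mvr E₀ u) + eh + mvr Bh δh →
      y = hM (xh + mvr E₀ u) + v →
      dotProduct (fun i => (f (xh + mvr E₀ u) + w - xhp) i)
        (P⁻¹.mulVec fun i => (f (xh + mvr E₀ u) + w - xhp) i) ≤ 1 := by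
  intro u w δf v δh hu hw hv hδf hδh hlinf hlinh hmeas
  have hΦ : Phi6 (f xh) ef xhp Jf E₀ Bf *ᵥ blockVec6 u w v δf δh =
      (f (xh + mvr E₀ u) + w - xhp).ofLp := by
    rw [Phi6_mulVec_blockVec6, hlinf]
    congr 1
    abel
  have hΨ : Psi6 (hM xh) eh y JhM E₀ Bh *ᵥ blockVec6 u w v δf δh = 0 := by
    rw [Psi6_mulVec_blockVec6, hmeas, hlinh, ← WithLp.ofLp_zero 2]
    congr 1
    abel
  rw [sub_sub] at hLMI
  have hS := dotProduct_mulVec_le_of_negSemidef' hLMI (blockVec6 u w v δf δh)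
  rw [add_mulVec, dotProduct_add, smul_mulVec, dotProduct_smul,
    dotProduct_transpose_mul_mul_mulVec, hΦ, ← mulVec_mulVec, hΨ, mulVec_zero, dotProduct_zero,
    smul_zero, add_zero] at hS
  exact hS.trans
    (blockVec6_dotProduct_Xi6_mulVec_le_one _ _ _ _ _ hτu hτw hτv hτf hτh hu hw hv hδf hδh)

/-- **Theorem 1 (prediction-step sufficiency).** If there are multipliers
`τu, τw, τv, τf, τh ≥ 0` and `τy ∈ ℝ` with `ΦᵀP⁻¹Φ − Ξ − τy·ΨᵀΨ ⪯ 0`, then every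
admissible `(u, w, v, δf, δh)` consistent with the exact linearizations and the
measurement equation yields a one-step-ahead state `x⁺ = f(x̂+E₀u) + w` lying in the
ellipsoid with center `x̂ₚ` and shape matrix `P`. -/
theorem prediction_step_sufficiency
    {n n₁ : ℕ} (hn : 0 < n) (hn₁ : 0 < n₁)
    (f : EuclideanSpace ℝ (Fin n) → EuclideanSpace ℝ (Fin n))
    (hM : EuclideanSpace ℝ (Fin n) → EuclideanSpace ℝ (Fin n₁))
    (xh : EuclideanSpace ℝ (Fin n)) (E₀ Jf : Matrix (Fin n) (Fin n) ℝ)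
    (JhM : Matrix (Fin n₁) (Fin n) ℝ)
    (ef : EuclideanSpace ℝ (Fin n)) (Bf : Matrix (Fin n) (Fin n) ℝ)
    (eh : EuclideanSpace ℝ (Fin n₁)) (Bh : Matrix (Fin n₁) (Fin n₁) ℝ)
    (y : EuclideanSpace ℝ (Fin n₁)) (xhp : EuclideanSpace ℝ (Fin n))
    (P Q : Matrix (Fin n) (Fin n) ℝ) (R : Matrix (Fin n₁) (Fin n₁) ℝ)
    (hP : P.PosDef) (hQ : Q.PosDef) (hR : R.PosDef)
    (τu τw τv τf τh τy : ℝ)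
    (hτu : 0 ≤ τu) (hτw : 0 ≤ τw) (hτv : 0 ≤ τv) (hτf : 0 ≤ τf) (hτh : 0 ≤ τh)
    (hLMI : Matrix.NegSemidef'
      ((Phi6 (n₁ := n₁) (f xh) ef xhp Jf E₀ Bf).transpose * P⁻¹ *
          Phi6 (n₁ := n₁) (f xh) ef xhp Jf E₀ Bf -
        Xi6 Q R τu τw τv τf τh -
        τy • ((Psi6 (hM xh) eh y JhM E₀ Bh).transpose * Psi6 (hM xh) eh y JhM E₀ Bh))) :
    ∀ (u w δf : EuclideanSpace ℝ (Fin n)) (v δh : EuclideanSpace ℝ (Fin n₁)),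
      ‖u‖ ≤ 1 →
      dotProduct (fun i => w i) (Q⁻¹.mulVec fun i => w i) ≤ 1 →
      dotProduct (fun i => v i) (R⁻¹.mulVec fun i => v i) ≤ 1 →
      ‖δf‖ ≤ 1 → ‖δh‖ ≤ 1 →
      f (xh + mvr E₀ u) = f xh + mvr Jf (mvr E₀ u) + ef + mvr Bf δf →
      hM (xh + mvr E₀ u) = hM xh + mvr JhM (mvr E₀ u) + eh + mvr Bh δh →
      y = hM (xh + mvr E₀ u) + v →
      dotProduct (fun i => (f (xh + mvr E₀ u) + w - xhp) i)
        (P⁻¹.mulVec fun i => (f (xh + mvr E₀ u) + w - xhp) i) ≤ 1 :=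
  prediction_step_sufficiency_general f hM xh E₀ Jf JhM ef Bf eh Bh y xhp P Q R τu τw τv τf τh τy
    hτu hτw hτv hτf hτh hLMI
end
end

section
/- (Theorem 2, measurement-update sufficiency.) Suppose there exist reals τu, τv, τh ≥ 0 and τy ∈ ℝ such that the m×m symmetric matrix ΦᵀP⁻¹Φ − Ξ − τy·ΨᵀΨ is negative semidefinite. Then for all u ∈ ℝⁿ and v, δh ∈ ℝ^{n₁} with ‖u‖ ≤ 1, vᵀR⁻¹v ≤ 1, ‖δh‖ ≤ 1 (Euclidean norms) that satisfy the exact linearization identity hₘ(x̂ₚ + E₀u) = hₘ(x̂ₚ) + J_h E₀ u + e_h + B_h δh and the measurement equation y = hₘ(x̂ₚ + E₀u) + v, the state x := x̂ₚ + E₀ u satisfies (x − x̂ᵤ)ᵀ P⁻¹ (x − x̂ᵤ) ≤ 1, i.e. x lies in the ellipsoid with center x̂ᵤ and shape matrix P. -/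
/-!
With `ξ = (1, u, v, δh)` one has `Φ ξ = x − x̂ᵤ`, while the linearization identity and the
measurement equation say exactly that `Ψ ξ = 0`. Testing the matrix inequality against `ξ`
therefore removes the `τy` term, whatever its sign, and leaves
`(x − x̂ᵤ)ᵀ P⁻¹ (x − x̂ᵤ) ≤ ξᵀ Ξ ξ = 1 − τu (1 − ‖u‖²) − τv (1 − vᵀR⁻¹v) − τh (1 − ‖δh‖²) ≤ 1`.
-/

noncomputable section

/-- Index type for `ℝ^m` with `m = 1 + n + 2n₁`, split into four blocks of sizes
`1, n, n₁, n₁` (corresponding to the components `1, u, v, δh`). -/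
abbrev Idx4 (n n₁ : ℕ) := Fin 1 ⊕ (Fin n ⊕ (Fin n₁ ⊕ Fin n₁))

/-- The block matrix `Φ = [x̂ₚ−x̂ᵤ ∣ E₀ ∣ 0 ∣ 0]`. -/
def Phi4 {n n₁ : ℕ} (xhp xhu : EuclideanSpace ℝ (Fin n))
    (E₀ : Matrix (Fin n) (Fin n) ℝ) : Matrix (Fin n) (Idx4 n n₁) ℝ :=
  Matrix.fromCols (colOf (xhp - xhu))
    (Matrix.fromCols E₀ (Matrix.fromCols 0 0))

/-- The block matrix `Ψ = [hₘ(x̂ₚ)+e_h−y ∣ J_h E₀ ∣ I_{n₁} ∣ B_h]`. -/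
def Psi4 {n n₁ : ℕ} (hxhp eh y : EuclideanSpace ℝ (Fin n₁))
    (JhM : Matrix (Fin n₁) (Fin n) ℝ) (E₀ : Matrix (Fin n) (Fin n) ℝ)
    (Bh : Matrix (Fin n₁) (Fin n₁) ℝ) : Matrix (Fin n₁) (Idx4 n n₁) ℝ :=
  Matrix.fromCols (colOf (hxhp + eh - y))
    (Matrix.fromCols (JhM * E₀) (Matrix.fromCols 1 Bh))

/-- The block-diagonal multiplier matrix
`Ξ = diag(1−τu−τv−τh, τu Iₙ, τv R⁻¹, τh I_{n₁})`. -/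
def Xi4 {n n₁ : ℕ} (R : Matrix (Fin n₁) (Fin n₁) ℝ) (τu τv τh : ℝ) :
    Matrix (Idx4 n n₁) (Idx4 n n₁) ℝ :=
  Matrix.fromBlocks ((1 - τu - τv - τh) • (1 : Matrix (Fin 1) (Fin 1) ℝ)) 0 0
    (Matrix.fromBlocks (τu • (1 : Matrix (Fin n) (Fin n) ℝ)) 0 0
      (Matrix.fromBlocks (τv • R⁻¹) 0 0
        (τh • (1 : Matrix (Fin n₁) (Fin n₁) ℝ))))

open Matrix

section QuadraticForm

variable {ι κ α : Type*} [Fintype ι] [Fintype κ]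

theorem dotProduct_transpose_mul_mul_mulVec_s1 [CommSemiring α] (Φ : Matrix κ ι α)
    (M : Matrix κ κ α) (ξ : ι → α) :
    ξ ⬝ᵥ (Φᵀ * M * Φ) *ᵥ ξ = (Φ *ᵥ ξ) ⬝ᵥ M *ᵥ (Φ *ᵥ ξ) := by
  rw [← mulVec_mulVec, ← mulVec_mulVec, dotProduct_transpose_mulVec, dotProduct_comm]

theorem Matrix.NegSemidef'.dotProduct_mulVec_le {A X : Matrix ι ι ℝ} {Ψ : Matrix κ ι ℝ} {τ : ℝ}
    (h : (A - X - τ • (Ψᵀ * Ψ)).NegSemidef') {ξ : ι → ℝ} (hξ : Ψ *ᵥ ξ = 0) :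
    ξ ⬝ᵥ A *ᵥ ξ ≤ ξ ⬝ᵥ X *ᵥ ξ := by
  have hnonneg := h.dotProduct_mulVec_nonneg ξ
  have hΨ : ξ ⬝ᵥ (Ψᵀ * Ψ) *ᵥ ξ = 0 := by
    rw [← mulVec_mulVec, dotProduct_transpose_mulVec, hξ, zero_dotProduct]
  simp only [star_trivial, neg_mulVec, sub_mulVec, smul_mulVec, dotProduct_neg, dotProduct_sub,
    dotProduct_smul, hΨ, smul_zero] at hnonneg
  linarith

end QuadraticForm

theorem EuclideanSpace.ofLp_dotProduct_self {ι : Type*} [Fintype ι] (x : EuclideanSpace ℝ ι) :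
    x.ofLp ⬝ᵥ x.ofLp = ‖x‖ ^ 2 := by
  rw [← real_inner_self_eq_norm_sq, EuclideanSpace.inner_eq_star_dotProduct, star_trivial]

section Blocks

variable {n n₁ : ℕ}

/-- The paper's vector `ξ = (1, u, v, δh)`. -/
def augmentedVec (u : EuclideanSpace ℝ (Fin n)) (v δh : EuclideanSpace ℝ (Fin n₁)) :
    Idx4 n n₁ → ℝ :=
  Sum.elim 1 (Sum.elim u.ofLp (Sum.elim v.ofLp δh.ofLp))

theorem colOf_mulVec_one_s1 (w : EuclideanSpace ℝ (Fin n)) : colOf w *ᵥ 1 = w.ofLp := by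
  ext i
  simp [colOf, mulVec, dotProduct]

variable (u : EuclideanSpace ℝ (Fin n)) (v δh : EuclideanSpace ℝ (Fin n₁))

theorem Phi4_mulVec_augmentedVec (xhp xhu : EuclideanSpace ℝ (Fin n))
    (E₀ : Matrix (Fin n) (Fin n) ℝ) :
    Phi4 xhp xhu E₀ *ᵥ augmentedVec u v δh = (xhp + mvr E₀ u - xhu).ofLp := by
  simp only [Phi4, augmentedVec, fromCols_mulVec_sumElim, colOf_mulVec_one_s1, zero_mulVec,
    add_zero, mvr, WithLp.ofLp_add, WithLp.ofLp_sub]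
  abel

theorem Psi4_mulVec_augmentedVec (hxhp eh y : EuclideanSpace ℝ (Fin n₁))
    (JhM : Matrix (Fin n₁) (Fin n) ℝ) (E₀ : Matrix (Fin n) (Fin n) ℝ)
    (Bh : Matrix (Fin n₁) (Fin n₁) ℝ) :
    Psi4 hxhp eh y JhM E₀ Bh *ᵥ augmentedVec u v δh =
      (hxhp + eh - y + mvr JhM (mvr E₀ u) + v + mvr Bh δh).ofLp := by
  simp only [Psi4, augmentedVec, fromCols_mulVec_sumElim, colOf_mulVec_one_s1, one_mulVec,
    mulVec_mulVec, mvr, WithLp.ofLp_add, WithLp.ofLp_sub, WithLp.ofLp_toLp]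
  abel

theorem augmentedVec_dotProduct_Xi4_mulVec (R : Matrix (Fin n₁) (Fin n₁) ℝ) (τu τv τh : ℝ) :
    augmentedVec u v δh ⬝ᵥ Xi4 R τu τv τh *ᵥ augmentedVec u v δh =
      (1 - τu - τv - τh) + τu * (u.ofLp ⬝ᵥ u.ofLp) + τv * (v.ofLp ⬝ᵥ R⁻¹ *ᵥ v.ofLp) +
        τh * (δh.ofLp ⬝ᵥ δh.ofLp) := by
  simp only [Xi4, augmentedVec, fromBlocks_mulVec, Sum.elim_comp_inl, Sum.elim_comp_inr,
    smul_mulVec, one_mulVec, zero_mulVec, add_zero, zero_add, sumElim_dotProduct_sumElim,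
    dotProduct_smul, one_dotProduct_one, Fintype.card_unique, Nat.cast_one, smul_eq_mul]
  ring

end Blocks

theorem measurement_update_sufficiency_general
    {n n₁ : ℕ}
    (hM : EuclideanSpace ℝ (Fin n) → EuclideanSpace ℝ (Fin n₁))
    (xhp : EuclideanSpace ℝ (Fin n)) (E₀ : Matrix (Fin n) (Fin n) ℝ)
    (JhM : Matrix (Fin n₁) (Fin n) ℝ)
    (eh : EuclideanSpace ℝ (Fin n₁)) (Bh : Matrix (Fin n₁) (Fin n₁) ℝ)
    (y : EuclideanSpace ℝ (Fin n₁)) (xhu : EuclideanSpace ℝ (Fin n))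
    (P : Matrix (Fin n) (Fin n) ℝ) (R : Matrix (Fin n₁) (Fin n₁) ℝ)
    (τu τv τh τy : ℝ)
    (hτu : 0 ≤ τu) (hτv : 0 ≤ τv) (hτh : 0 ≤ τh)
    (hLMI : Matrix.NegSemidef'
      ((Phi4 (n₁ := n₁) xhp xhu E₀).transpose * P⁻¹ * Phi4 (n₁ := n₁) xhp xhu E₀ -
        Xi4 R τu τv τh -
        τy • ((Psi4 (hM xhp) eh y JhM E₀ Bh).transpose * Psi4 (hM xhp) eh y JhM E₀ Bh))) :
    ∀ (u : EuclideanSpace ℝ (Fin n)) (v δh : EuclideanSpace ℝ (Fin n₁)),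
      ‖u‖ ≤ 1 →
      dotProduct (fun i => v i) (R⁻¹.mulVec fun i => v i) ≤ 1 →
      ‖δh‖ ≤ 1 →
      hM (xhp + mvr E₀ u) = hM xhp + mvr JhM (mvr E₀ u) + eh + mvr Bh δh →
      y = hM (xhp + mvr E₀ u) + v →
      dotProduct (fun i => (xhp + mvr E₀ u - xhu) i)
        (P⁻¹.mulVec fun i => (xhp + mvr E₀ u - xhu) i) ≤ 1 := by
  intro u v δh hu hv hδh hlin hmeas
  have hΨ : Psi4 (hM xhp) eh y JhM E₀ Bh *ᵥ augmentedVec u v δh = 0 := by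
    have hresidual : hM xhp + eh - y + mvr JhM (mvr E₀ u) + v + mvr Bh δh = 0 := by
      rw [hmeas, hlin]; abel
    rw [Psi4_mulVec_augmentedVec, hresidual, WithLp.ofLp_zero]
  have hu2 : u.ofLp ⬝ᵥ u.ofLp ≤ 1 := by
    rw [EuclideanSpace.ofLp_dotProduct_self]; exact pow_le_one₀ (norm_nonneg u) hu
  have hδh2 : δh.ofLp ⬝ᵥ δh.ofLp ≤ 1 := by
    rw [EuclideanSpace.ofLp_dotProduct_self]; exact pow_le_one₀ (norm_nonneg δh) hδh
  calc _ = augmentedVec u v δh ⬝ᵥ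
          ((Phi4 (n₁ := n₁) xhp xhu E₀)ᵀ * P⁻¹ * Phi4 xhp xhu E₀) *ᵥ augmentedVec u v δh := by
        rw [dotProduct_transpose_mul_mul_mulVec_s1, Phi4_mulVec_augmentedVec]
    _ ≤ augmentedVec u v δh ⬝ᵥ Xi4 R τu τv τh *ᵥ augmentedVec u v δh :=
        hLMI.dotProduct_mulVec_le hΨ
    _ ≤ 1 := by
        rw [augmentedVec_dotProduct_Xi4_mulVec]
        linarith [mul_le_mul_of_nonneg_left hu2 hτu, mul_le_mul_of_nonneg_left hv hτv,
          mul_le_mul_of_nonneg_left hδh2 hτh]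

/-- **Theorem 2 (measurement-update sufficiency).** If there are multipliers
`τu, τv, τh ≥ 0` and `τy ∈ ℝ` with `ΦᵀP⁻¹Φ − Ξ − τy·ΨᵀΨ ⪯ 0`, then every admissible
`(u, v, δh)` consistent with the exact linearization and the measurement equation yields a
state `x = x̂ₚ + E₀u` lying in the ellipsoid with center `x̂ᵤ` and shape matrix `P`. -/
theorem measurement_update_sufficiency
    {n n₁ : ℕ} (hn : 0 < n) (hn₁ : 0 < n₁)
    (hM : EuclideanSpace ℝ (Fin n) → EuclideanSpace ℝ (Fin n₁))
    (xhp : EuclideanSpace ℝ (Fin n)) (E₀ : Matrix (Fin n) (Fin n) ℝ)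
    (JhM : Matrix (Fin n₁) (Fin n) ℝ)
    (eh : EuclideanSpace ℝ (Fin n₁)) (Bh : Matrix (Fin n₁) (Fin n₁) ℝ)
    (y : EuclideanSpace ℝ (Fin n₁)) (xhu : EuclideanSpace ℝ (Fin n))
    (P : Matrix (Fin n) (Fin n) ℝ) (R : Matrix (Fin n₁) (Fin n₁) ℝ)
    (hP : P.PosDef) (hR : R.PosDef)
    (τu τv τh τy : ℝ)
    (hτu : 0 ≤ τu) (hτv : 0 ≤ τv) (hτh : 0 ≤ τh)
    (hLMI : Matrix.NegSemidef'
      ((Phi4 (n₁ := n₁) xhp xhu E₀).transpose * P⁻¹ * Phi4 (n₁ := n₁) xhp xhu E₀ -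
        Xi4 R τu τv τh -
        τy • ((Psi4 (hM xhp) eh y JhM E₀ Bh).transpose * Psi4 (hM xhp) eh y JhM E₀ Bh))) :
    ∀ (u : EuclideanSpace ℝ (Fin n)) (v δh : EuclideanSpace ℝ (Fin n₁)),
      ‖u‖ ≤ 1 →
      dotProduct (fun i => v i) (R⁻¹.mulVec fun i => v i) ≤ 1 →
      ‖δh‖ ≤ 1 →
      hM (xhp + mvr E₀ u) = hM xhp + mvr JhM (mvr E₀ u) + eh + mvr Bh δh →
      y = hM (xhp + mvr E₀ u) + v →
      dotProduct (fun i => (xhp + mvr E₀ u - xhu) i)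
        (P⁻¹.mulVec fun i => (xhp + mvr E₀ u - xhu) i) ≤ 1 :=
  measurement_update_sufficiency_general hM xhp E₀ JhM eh Bh y xhu P R τu τv τh τy hτu hτv hτh hLMI
end
end

section
/- (Determinant identity for the difference of Jacobians, from the proof of the Remainder Lemma.) For all p, q ∈ ℝ² with p ≠ o and q ≠ o, det(J_h(p) − J_h(q)) = ( r(p)·r(q) − ((p₁−a)(q₁−a) + (p₂−b)(q₂−b)) ) · ( r(p) + r(q) ) / ( r(p)² · r(q)² ). -/
/-!
Put `x = p - o`, `y = q - o`, `r = ‖x‖`, `s = ‖y‖`. The rows of `J_h(p)` are `x / r` and the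
quarter turn of `x / r²`, so `det (J_h(p) - J_h(q)) = ⟪x / r - y / s, x / r² - y / s²⟫`, which
expands to `1 / r + 1 / s - ⟪x, y⟫ (r + s) / (r² s²)`.
-/

noncomputable section

/-- Matrix–vector multiplication, viewed as a map on the Euclidean plane. -/
def mv (M : Matrix (Fin 2) (Fin 2) ℝ) (u : EuclideanSpace ℝ (Fin 2)) :
    EuclideanSpace ℝ (Fin 2) := WithLp.toLp 2 (M.mulVec u)

/-- Range `r(p) = √((p₁−a)² + (p₂−b)²)` to the sensor located at `(a, b)`. -/
def rr (a b : ℝ) (p : EuclideanSpace ℝ (Fin 2)) : ℝ :=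
  Real.sqrt ((p 0 - a) ^ 2 + (p 1 - b) ^ 2)

/-- Bearing `θ(p)`: polar angle in `(−π, π]` of the complex number `(p₁−a) + i(p₂−b)`. -/
def theta (a b : ℝ) (p : EuclideanSpace ℝ (Fin 2)) : ℝ :=
  Complex.arg ⟨p 0 - a, p 1 - b⟩

/-- Jacobian matrix of the range–bearing measurement map at `p`. -/
def Jh (a b : ℝ) (p : EuclideanSpace ℝ (Fin 2)) : Matrix (Fin 2) (Fin 2) ℝ :=
  !![(p 0 - a) / rr a b p, (p 1 - b) / rr a b p;
     -(p 1 - b) / (rr a b p) ^ 2, (p 0 - a) / (rr a b p) ^ 2]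

/-- The range–bearing measurement map `h(p) = (r(p), θ(p))`. -/
def hMeas (a b : ℝ) (p : EuclideanSpace ℝ (Fin 2)) : EuclideanSpace ℝ (Fin 2) :=
  WithLp.toLp 2 ![rr a b p, theta a b p]

/-- The linearization remainder `g(u) = h(x + Eu) − h(x) − J_h(x)·(Eu)`. -/
def gRem (a b : ℝ) (x : EuclideanSpace ℝ (Fin 2)) (E : Matrix (Fin 2) (Fin 2) ℝ)
    (u : EuclideanSpace ℝ (Fin 2)) : EuclideanSpace ℝ (Fin 2) :=
  hMeas a b (x + mv E u) - hMeas a b x - mv (Jh a b x) (mv E u)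

open scoped RealInnerProductSpace

theorem inner_inv_norm_smul_sub_inv_norm_sq_smul {E : Type*} [NormedAddCommGroup E]
    [InnerProductSpace ℝ E] {x y : E} (hx : x ≠ 0) (hy : y ≠ 0) :
    ⟪‖x‖⁻¹ • x - ‖y‖⁻¹ • y, (‖x‖ ^ 2)⁻¹ • x - (‖y‖ ^ 2)⁻¹ • y⟫ =
      (‖x‖ * ‖y‖ - ⟪x, y⟫) * (‖x‖ + ‖y‖) / (‖x‖ ^ 2 * ‖y‖ ^ 2) := by
  have hx' : ‖x‖ ≠ 0 := norm_ne_zero_iff.mpr hx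
  have hy' : ‖y‖ ≠ 0 := norm_ne_zero_iff.mpr hy
  simp only [inner_sub_left, inner_sub_right, real_inner_smul_left, real_inner_smul_right,
    real_inner_self_eq_norm_sq, real_inner_comm x y]
  field_simp
  ring

theorem rr_eq_norm_sub (a b : ℝ) (p : EuclideanSpace ℝ (Fin 2)) :
    rr a b p = ‖p - WithLp.toLp 2 ![a, b]‖ := by
  simp [rr, EuclideanSpace.norm_eq, Fin.sum_univ_two]

theorem inner_sub_sub_toLp (a b : ℝ) (p q : EuclideanSpace ℝ (Fin 2)) :
    ⟪p - WithLp.toLp 2 ![a, b], q - WithLp.toLp 2 ![a, b]⟫ =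
      (p 0 - a) * (q 0 - a) + (p 1 - b) * (q 1 - b) := by
  simp [PiLp.inner_apply, Fin.sum_univ_two, mul_comm]

theorem det_Jh_sub_Jh (a b : ℝ) (p q : EuclideanSpace ℝ (Fin 2)) :
    (Jh a b p - Jh a b q).det =
      ⟪(rr a b p)⁻¹ • (p - WithLp.toLp 2 ![a, b]) - (rr a b q)⁻¹ • (q - WithLp.toLp 2 ![a, b]),
        (rr a b p ^ 2)⁻¹ • (p - WithLp.toLp 2 ![a, b]) -
          (rr a b q ^ 2)⁻¹ • (q - WithLp.toLp 2 ![a, b])⟫ := by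
  simp only [Jh, Matrix.of_sub_of, Matrix.sub_cons, Matrix.head_cons, Matrix.tail_cons, sub_self,
    Matrix.zero_empty, Matrix.det_fin_two_of, PiLp.inner_apply, PiLp.sub_apply, PiLp.smul_apply,
    smul_eq_mul, RCLike.inner_apply, conj_trivial, Fin.sum_univ_two, Matrix.cons_val_zero,
    Matrix.cons_val_one]
  ring

/-- **Determinant identity for the difference of Jacobians.** -/
theorem det_jacobianDiff_formula
    (a b : ℝ) (p q : EuclideanSpace ℝ (Fin 2))
    (hp : p ≠ (WithLp.toLp 2 ![a, b] : EuclideanSpace ℝ (Fin 2)))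
    (hq : q ≠ (WithLp.toLp 2 ![a, b] : EuclideanSpace ℝ (Fin 2))) :
    (Jh a b p - Jh a b q).det =
      (rr a b p * rr a b q - ((p 0 - a) * (q 0 - a) + (p 1 - b) * (q 1 - b))) *
        (rr a b p + rr a b q) / ((rr a b p) ^ 2 * (rr a b q) ^ 2) := by
  rw [det_Jh_sub_Jh, ← inner_sub_sub_toLp, rr_eq_norm_sub, rr_eq_norm_sub]
  exact inner_inv_norm_smul_sub_inv_norm_sq_smul (sub_ne_zero.mpr hp) (sub_ne_zero.mpr hq)
end
end
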